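/- arXiv:1702.08550 — 3 statements merged into one kernel-verified Lean document; each statement's English description precedes it below -/
import Mathlib

section
/- Let H be a submonoid of (ℂ⟨⟨X⟩⟩, ·) containing the letters X and all exponentials e^{tx} for x ∈ X, t ∈ ℂ. If S is a continuous series over H (i.e. Σ_w |⟨S,w⟩⟨Φ,w⟩| < ∞ for all Φ ∈ H) that is indiscernable over H (i.e. Σ_w ⟨S,w⟩⟨Φ,w⟩ = 0 for all Φ ∈ H), then S = 0. -/
/-- Cauchy (concatenation) product of two noncommutative series:
`⟨S·T, w⟩ = Σ_{uv = w} ⟨S,u⟩⟨T,v⟩`. -/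
noncomputable def catMul {X : Type*} (S T : List X → ℂ) : List X → ℂ :=
  fun w => ∑ i ∈ Finset.range (w.length + 1), S (w.take i) * T (w.drop i)

/-- The series `1` (the empty word). -/
noncomputable def oneSeries (X : Type*) [DecidableEq X] : List X → ℂ := fun w => if w = [] then 1 else 0

/-- The series associated to a letter `x`. -/
noncomputable def letterSeries {X : Type*} [DecidableEq X] (x : X) : List X → ℂ :=
  fun w => if w = [x] then 1 else 0

/-- The exponential series `e^{tx}`: its coefficient at `x^n` is `t^n/n!`, zero elsewhere. -/
noncomputable def expSeries {X : Type*} [DecidableEq X] (t : ℂ) (x : X) : List X → ℂ :=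
  fun w => if w = List.replicate w.length x
    then t ^ w.length / (Nat.factorial w.length : ℂ) else 0

/-! The indicator series of a word `w` is the product of the letter series of its letters, so it
lies in `H`; pairing `S` with it extracts the coefficient `⟨S, w⟩`, which therefore vanishes. -/

section

variable {X : Type*} [DecidableEq X]

theorem oneSeries_eq_single : oneSeries X = Pi.single [] 1 := by
  funext w
  simp [oneSeries, Pi.single_apply]

theorem letterSeries_eq_single (x : X) : letterSeries x = Pi.single [x] 1 := by
  funext w
  simp [letterSeries, Pi.single_apply]

theorem catMul_single_single (u v : List X) (a b : ℂ) :
    catMul (Pi.single u a) (Pi.single v b) = Pi.single (u ++ v) (a * b) := by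
  funext w
  rw [catMul, Finset.sum_eq_single u.length]
  · by_cases hw : w = u ++ v
    · subst hw
      simp
    · simp only [Pi.single_apply, hw, if_false, mul_ite, ite_mul, mul_zero, zero_mul]
      split_ifs with hv hu
      · exact absurd (by rw [← List.take_append_drop u.length w, hu, hv]) hw
      all_goals rfl
  · intro i hi hne
    have : w.take i ≠ u := by
      rintro rfl
      simp at hi hne
      omega
    simp [Pi.single_apply, this]
  · intro hu
    have : w.take u.length ≠ u := by
      intro h
      have := congrArg List.length h
      simp at hu this
      omega
    simp [Pi.single_apply, this]

theorem single_mem_of_letters {H : Set (List X → ℂ)} (hone : oneSeries X ∈ H)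
    (hmul : ∀ Φ ∈ H, ∀ Ψ ∈ H, catMul Φ Ψ ∈ H) (hletter : ∀ x : X, letterSeries x ∈ H)
    (w : List X) : Pi.single w 1 ∈ H := by
  induction w with
  | nil => rwa [← oneSeries_eq_single]
  | cons x v ih =>
    simpa [catMul_single_single, letterSeries_eq_single] using hmul _ (hletter x) _ ih

theorem tsum_mul_single_one (S : List X → ℂ) (w : List X) :
    ∑' u, S u * (Pi.single w 1 : List X → ℂ) u = S w := by
  rw [tsum_eq_single w fun u hu => by simp [hu]]
  simp

end

theorem stmt6_general {X : Type*} [DecidableEq X]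
    (H : Set (List X → ℂ)) (S : List X → ℂ)
    (hone : oneSeries X ∈ H)
    (hmul : ∀ Φ ∈ H, ∀ Ψ ∈ H, catMul Φ Ψ ∈ H)
    (hletter : ∀ x : X, letterSeries x ∈ H)
    (hindisc : ∀ Φ ∈ H, ∑' w : List X, S w * Φ w = 0) :
    S = 0 := by
  funext w
  rw [← tsum_mul_single_one S w]
  exact hindisc _ (single_mem_of_letters hone hmul hletter w)

/-- If `H` is a submonoid of `(ℂ⟨⟨X⟩⟩, ·)` containing the letters and the exponentials
`e^{tx}`, and `S` is continuous and indiscernable over `H`, then `S = 0`. -/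
theorem stmt6 {X : Type*} [DecidableEq X] [Fintype X]
    (H : Set (List X → ℂ)) (S : List X → ℂ)
    (hone : oneSeries X ∈ H)
    (hmul : ∀ Φ ∈ H, ∀ Ψ ∈ H, catMul Φ Ψ ∈ H)
    (hletter : ∀ x : X, letterSeries x ∈ H)
    (hexp : ∀ (t : ℂ) (x : X), expSeries t x ∈ H)
    (hcont : ∀ Φ ∈ H, Summable (fun w : List X => ‖S w‖ * ‖Φ w‖))
    (hindisc : ∀ Φ ∈ H, ∑' w : List X, S w * Φ w = 0) :
    S = 0 :=
  stmt6_general H S hone hmul hletter hindisc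
end

section
/- For all integers m, n ≥ 0 and |z| < 1, the double negative polylogarithm satisfies the identity Li_{−m,−n}(z) = Σ_{l=0}^{m} C(m,l) Li_{−l}(z) · Li_{−(m+n−l)}(z), where Li_{−m,−n}(z) = Σ_{n₁>n₂>0} n₁^m n₂^n z^{n₁}. -/
/-- The polylogarithm at a negative index: `Li_{−s}(z) = Σ_{k≥1} k^s z^k`. -/
noncomputable def LiNeg (s : ℕ) (z : ℂ) : ℂ :=
  ∑' k : ℕ, ((k + 1 : ℕ) : ℂ) ^ s * z ^ (k + 1)

/-- The double polylogarithm at negative indices: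
`Li_{−s₁,−s₂}(z) = Σ_{n₁>n₂≥1} n₁^{s₁} n₂^{s₂} z^{n₁}`. -/
noncomputable def LiNeg₂ (s₁ s₂ : ℕ) (z : ℂ) : ℂ :=
  ∑' p : ℕ × ℕ,
    if 0 < p.2 ∧ p.2 < p.1 then ((p.1 : ℂ)) ^ s₁ * ((p.2 : ℂ)) ^ s₂ * z ^ p.1 else 0

/-!
Write `n₁ = a + b` and `n₂ = b` with `a, b ≥ 1`. Then `n₁^m n₂^n z^{n₁}` expands by the binomial
theorem into `Σ_l C(m,l) (a^l z^a) (b^{m+n-l} z^b)`, and summing over `a, b ≥ 1` turns each term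
into the Cauchy product `Li_{−l}(z) Li_{−(m+n−l)}(z)`, which converges absolutely for `|z| < 1`.
-/

open Finset

theorem add_pow_mul_pow_eq_sum {R : Type*} [CommSemiring R] (x y : R) (m n : ℕ) :
    (x + y) ^ m * y ^ n = ∑ l ∈ range (m + 1), (m.choose l : R) * x ^ l * y ^ (m + n - l) := by
  rw [add_pow, sum_mul]
  refine sum_congr rfl fun l hl => ?_
  rw [show m + n - l = (m - l) + n by have := mem_range.1 hl; omega, pow_add]
  ring

theorem summable_norm_succ_pow_mul_pow (s : ℕ) {z : ℂ} (hz : ‖z‖ < 1) :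
    Summable fun k : ℕ => ‖((k + 1 : ℕ) : ℂ) ^ s * z ^ (k + 1)‖ := by
  have h : Summable fun k : ℕ => (k : ℝ) ^ s * ‖z‖ ^ k :=
    summable_pow_mul_geometric_of_norm_lt_one s (by simpa using hz)
  refine ((summable_nat_add_iff 1).2 h).congr fun k => ?_
  rw [norm_mul, norm_pow, norm_pow, Complex.norm_natCast]

theorem LiNeg_mul_LiNeg {z : ℂ} (hz : ‖z‖ < 1) (s t : ℕ) :
    LiNeg s z * LiNeg t z = ∑' p : ℕ × ℕ,
      (((p.1 + 1 : ℕ) : ℂ) ^ s * z ^ (p.1 + 1)) * (((p.2 + 1 : ℕ) : ℂ) ^ t * z ^ (p.2 + 1)) :=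
  tsum_mul_tsum_of_summable_norm (summable_norm_succ_pow_mul_pow s hz)
    (summable_norm_succ_pow_mul_pow t hz)

theorem summable_LiNeg_mul_LiNeg {z : ℂ} (hz : ‖z‖ < 1) (s t : ℕ) :
    Summable fun p : ℕ × ℕ =>
      (((p.1 + 1 : ℕ) : ℂ) ^ s * z ^ (p.1 + 1)) * (((p.2 + 1 : ℕ) : ℂ) ^ t * z ^ (p.2 + 1)) :=
  summable_mul_of_summable_norm (f := fun a : ℕ => ((a + 1 : ℕ) : ℂ) ^ s * z ^ (a + 1))
    (g := fun b : ℕ => ((b + 1 : ℕ) : ℂ) ^ t * z ^ (b + 1))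
    (summable_norm_succ_pow_mul_pow s hz) (summable_norm_succ_pow_mul_pow t hz)

theorem LiNeg₂_eq_tsum (s₁ s₂ : ℕ) (z : ℂ) :
    LiNeg₂ s₁ s₂ z = ∑' p : ℕ × ℕ,
      (((p.1 + 1 + (p.2 + 1) : ℕ) : ℂ)) ^ s₁ * ((p.2 + 1 : ℕ) : ℂ) ^ s₂ *
        z ^ (p.1 + 1 + (p.2 + 1)) := by
  let g : ℕ × ℕ → ℕ × ℕ := fun q => (q.1 + 1 + (q.2 + 1), q.2 + 1)
  have hg : Function.Injective g := fun q q' h => by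
    simp only [g, Prod.mk.injEq] at h
    ext <;> omega
  have hsupp : Function.support (fun p : ℕ × ℕ =>
      if 0 < p.2 ∧ p.2 < p.1 then ((p.1 : ℂ)) ^ s₁ * ((p.2 : ℂ)) ^ s₂ * z ^ p.1 else 0)
        ⊆ Set.range g := by
    intro p hp
    obtain ⟨h₀, h₁⟩ : 0 < p.2 ∧ p.2 < p.1 := by
      by_contra hc
      exact hp (if_neg hc)
    exact ⟨(p.1 - p.2 - 1, p.2 - 1), Prod.ext (by simp only [g]; omega) (by simp only [g]; omega)⟩
  rw [LiNeg₂, ← hg.tsum_eq hsupp]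
  refine tsum_congr fun q => ?_
  simp only [g]
  rw [if_pos ⟨by omega, by omega⟩]

/-- For all `m, n ≥ 0` and `|z| < 1`:
`Li_{−m,−n}(z) = Σ_{l=0}^{m} C(m,l) Li_{−l}(z) Li_{−(m+n−l)}(z)`. -/
theorem stmt9 (m n : ℕ) (z : ℂ) (hz : ‖z‖ < 1) :
    LiNeg₂ m n z
      = ∑ l ∈ Finset.range (m + 1),
          (m.choose l : ℂ) * LiNeg l z * LiNeg (m + n - l) z := by
  have hterm : ∀ a b : ℕ,
      (((a + b : ℕ) : ℂ)) ^ m * (b : ℂ) ^ n * z ^ (a + b)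
        = ∑ l ∈ range (m + 1), (m.choose l : ℂ) * (((a : ℂ) ^ l * z ^ a) *
            ((b : ℂ) ^ (m + n - l) * z ^ b)) := fun a b => by
    rw [Nat.cast_add, mul_comm _ (z ^ _), add_pow_mul_pow_eq_sum, mul_sum, pow_add]
    exact sum_congr rfl fun l _ => by ring
  simp only [LiNeg₂_eq_tsum, hterm]
  rw [Summable.tsum_finsetSum fun l _ => (summable_LiNeg_mul_LiNeg hz _ _).mul_left _]
  exact sum_congr rfl fun l _ => by rw [tsum_mul_left, ← LiNeg_mul_LiNeg hz, mul_assoc]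
end

section
/- For every word w = y_{s₁}⋯y_{s_r} over Y₀, the normalized limit lim_{N→∞} H^−_w(N)/N^{(w)+|w|} exists and equals C^−_w := Π over nonempty suffixes v of w of 1/((v)+|v|), where (w) = s₁+…+s_r is the weight and |w| = r the length. In particular H^−_w(N) is asymptotically N^{(w)+|w|}·C^−_w. -/
open Filter Polynomial Finset

/-- Harmonic sums at negative indices: for `w = y_{s₁}⋯y_{s_r}` (encoded as the list of its
indices), `H^−_w(N) = Σ_{N≥n₁>…>n_r>0} n₁^{s₁}⋯n_r^{s_r}`. -/
def Hneg : List ℕ → ℕ → ℚ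
  | [], _ => 1
  | s :: t, N => ∑ n ∈ Finset.Icc 1 N, (n : ℚ) ^ s * Hneg t (n - 1)

/-- `C^−_w = Π over nonempty suffixes v of w of 1/((v)+|v|)`, where `(v)` is the weight
(sum of the indices) and `|v|` the length. -/
noncomputable def Cneg (w : List ℕ) : ℝ :=
  ∏ i ∈ Finset.range w.length,
    (((w.drop i).sum + (w.drop i).length : ℕ) : ℝ)⁻¹

/-- The Faulhaber polynomial: evaluates at `N` to `∑ k < N, k^p`. -/
noncomputable def Fa (p : ℕ) : Polynomial ℚ :=
  ∑ i ∈ range (p + 1), C (_root_.bernoulli i * ((p + 1).choose i) / (p + 1)) * X ^ (p + 1 - i)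

lemma Fa_eval (p N : ℕ) : (Fa p).eval (N : ℚ) = ∑ k ∈ range N, (k : ℚ) ^ p := by
  rw [sum_range_pow, Fa]
  simp [eval_finset_sum, div_eq_mul_inv, mul_comm, mul_assoc, mul_left_comm]

lemma Fa_natDegree (p : ℕ) : (Fa p).natDegree ≤ p + 1 := by
  refine natDegree_sum_le_of_forall_le _ _ fun i hi => ?_
  exact (natDegree_C_mul_le _ _).trans (by simp)

lemma Fa_coeff (p : ℕ) : (Fa p).coeff (p + 1) = ((p : ℚ) + 1)⁻¹ := by
  rw [Fa, finset_sum_coeff]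
  rw [Finset.sum_eq_single 0]
  · rw [coeff_C_mul, coeff_X_pow, if_pos (by omega)]
    simp [div_eq_mul_inv]
  · intro i hi hne
    rw [coeff_C_mul, coeff_X_pow, if_neg (by omega)]
    simp
  · simp

lemma sumPoly (d : ℕ) (q : Polynomial ℚ) (hq : q.natDegree ≤ d) :
    ∃ Q : Polynomial ℚ, Q.natDegree ≤ d + 1 ∧
      Q.coeff (d + 1) = q.coeff d * ((d : ℚ) + 1)⁻¹ ∧
      ∀ N : ℕ, ∑ k ∈ range N, q.eval (k : ℚ) = Q.eval (N : ℚ) := by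
  refine ⟨∑ i ∈ range (d + 1), C (q.coeff i) * Fa i, ?_, ?_, ?_⟩
  · refine natDegree_sum_le_of_forall_le _ _ fun i hi => ?_
    exact (natDegree_C_mul_le _ _).trans ((Fa_natDegree i).trans (by simp at hi; omega))
  · rw [finset_sum_coeff, Finset.sum_eq_single d]
    · rw [coeff_C_mul, Fa_coeff]
    · intro i hi hne
      have h0 : (Fa i).coeff (d + 1) = 0 :=
        coeff_eq_zero_of_natDegree_lt
          (lt_of_le_of_lt (Fa_natDegree i) (by simp at hi; omega))
      rw [coeff_C_mul, h0, mul_zero]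
    · intro h; exact absurd (mem_range.mpr (by omega)) h
  · intro N
    have h1 : ∀ k : ℕ, q.eval (k : ℚ) = ∑ i ∈ range (d + 1), q.coeff i * (k : ℚ) ^ i :=
      fun k => eval_eq_sum_range' (lt_of_le_of_lt hq (Nat.lt_succ_self d)) _
    simp only [h1, eval_finset_sum, eval_mul, eval_C, Fa_eval]
    rw [Finset.sum_comm]
    simp [Finset.mul_sum]

lemma key (w : List ℕ) : ∃ P : Polynomial ℚ,
    P.natDegree ≤ w.sum + w.length ∧
    P.coeff (w.sum + w.length)
      = ∏ i ∈ range w.length, (((w.drop i).sum + (w.drop i).length : ℕ) : ℚ)⁻¹ ∧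
    ∀ N : ℕ, Hneg w N = P.eval (N : ℚ) := by
  induction w with
  | nil => exact ⟨1, by simp, by simp, fun N => by simp [Hneg]⟩
  | cons s t ih =>
    obtain ⟨P, hdeg, hcoeff, heval⟩ := ih
    set d := t.sum + t.length with hd
    have hPne : P.coeff d ≠ 0 := by
      rw [hcoeff]
      refine Finset.prod_ne_zero_iff.mpr fun i hi => ?_
      have hlen : (t.drop i).length ≥ 1 := by
        rw [List.length_drop]; simp at hi; omega
      positivity
    have hPdeg : P.natDegree = d := le_antisymm hdeg (le_natDegree_of_ne_zero hPne)
    have hmonic : ((X + 1 : Polynomial ℚ) ^ s).Monic := (monic_X_add_C 1).pow s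
    have hXdeg : ((X + 1 : Polynomial ℚ) ^ s).natDegree = s := by
      have h1 : (X + 1 : Polynomial ℚ).natDegree = 1 := by
        simpa using natDegree_X_add_C (1 : ℚ)
      rw [natDegree_pow, h1, mul_one]
    have hq : ((X + 1 : Polynomial ℚ) ^ s * P).natDegree ≤ s + d := by
      refine natDegree_mul_le.trans ?_
      rw [hXdeg, hPdeg]
    have hqcoeff : ((X + 1 : Polynomial ℚ) ^ s * P).coeff (s + d) = P.coeff d := by
      have := coeff_mul_degree_add_degree ((X + 1 : Polynomial ℚ) ^ s) P
      rw [hXdeg, hPdeg, hmonic.leadingCoeff, one_mul] at this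
      rw [this, leadingCoeff, hPdeg]
    obtain ⟨Q, hQdeg, hQcoeff, hQeval⟩ := sumPoly (s + d) _ hq
    have hD : (s :: t).sum + (s :: t).length = s + d + 1 := by
      simp [hd]; omega
    refine ⟨Q, ?_, ?_, ?_⟩
    · rw [hD]; exact hQdeg
    · rw [hD, hQcoeff, hqcoeff, hcoeff]
      rw [List.length_cons, Finset.prod_range_succ']
      simp only [List.drop_succ_cons, List.drop_zero]
      congr 1
      push_cast [hD]
      push_cast [hd]
      ring
    · intro N
      rw [Hneg, ← Finset.Ico_add_one_right_eq_Icc, Finset.sum_Ico_eq_sum_range, ← hQeval N]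
      refine Finset.sum_congr rfl fun k _ => ?_
      rw [Nat.add_sub_cancel_left, heval, eval_mul, eval_pow, eval_add, eval_X, eval_one]
      push_cast
      ring_nf

/-- For every word `w` over `Y₀`, `lim_{N→∞} H^−_w(N)/N^{(w)+|w|} = C^−_w`; in particular
`H^−_w(N)` is asymptotically equivalent to `C^−_w · N^{(w)+|w|}`. -/
theorem stmt12 (w : List ℕ) :
    Tendsto (fun N : ℕ => (Hneg w N : ℝ) / (N : ℝ) ^ (w.sum + w.length))
      atTop (nhds (Cneg w)) ∧
    Asymptotics.IsEquivalent atTop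
      (fun N : ℕ => (Hneg w N : ℝ))
      (fun N : ℕ => Cneg w * (N : ℝ) ^ (w.sum + w.length)) := by
  obtain ⟨P, hdeg, hcoeff, heval⟩ := key w
  set d := w.sum + w.length with hd
  set P' : Polynomial ℝ := P.map (Rat.castHom ℝ) with hP'
  have heval' : ∀ N : ℕ, (Hneg w N : ℝ) = P'.eval (N : ℝ) := by
    intro N
    rw [heval N, hP',
      show ((N : ℕ) : ℝ) = Rat.castHom ℝ ((N : ℕ) : ℚ) by norm_num,
      eval_map, eval₂_at_apply, Rat.coe_castHom]
  have hcoeff' : P'.coeff d = Cneg w := by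
    rw [hP', coeff_map, hcoeff, Cneg, Rat.coe_castHom]
    push_cast
    simp [List.map_map, Function.comp_def]
  have hCne : Cneg w ≠ 0 := by
    rw [Cneg]
    refine Finset.prod_ne_zero_iff.mpr fun i hi => ?_
    have hlen : (w.drop i).length ≥ 1 := by
      rw [List.length_drop]; simp at hi; omega
    positivity
  have hdeg' : P'.natDegree = d :=
    le_antisymm (natDegree_map_le.trans hdeg)
      (le_natDegree_of_ne_zero (hcoeff' ▸ hCne))
  have hlead : P'.leadingCoeff = Cneg w := by
    rw [leadingCoeff, hdeg', hcoeff']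
  have hP'ne : P' ≠ 0 := fun h => hCne (by rw [← hcoeff', h, coeff_zero])
  have hdegeq : P'.degree = ((X : Polynomial ℝ) ^ d).degree := by
    rw [degree_X_pow, degree_eq_natDegree hP'ne, hdeg']
  have htends : Tendsto (fun x : ℝ => P'.eval x / x ^ d) atTop (nhds (Cneg w)) := by
    have h := Polynomial.div_tendsto_leadingCoeff_div_of_degree_eq P' ((X : Polynomial ℝ) ^ d) hdegeq
    rw [hlead, leadingCoeff_X_pow, div_one] at h
    simpa [eval_pow] using h
  constructor
  · have := htends.comp (tendsto_natCast_atTop_atTop (R := ℝ))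
    refine this.congr fun N => ?_
    simp [heval' N]
  · have h := P'.isEquivalent_atTop_lead
    rw [hlead, hdeg'] at h
    have h2 : Asymptotics.IsEquivalent atTop (fun N : ℕ => P'.eval (N : ℝ))
        (fun N : ℕ => Cneg w * (N : ℝ) ^ d) :=
      h.comp_tendsto (tendsto_natCast_atTop_atTop (R := ℝ))
    have h3 : (fun N : ℕ => (Hneg w N : ℝ)) = fun N : ℕ => P'.eval (N : ℝ) :=
      funext fun N => heval' N
    rw [h3]
    exact h2
end
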